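/- (Main Theorem, part II, group-theoretic form.) Let A be a Bott matrix such that every row of A has an even number of nonzero entries. Suppose there exist 1 ≤ i < j ≤ n−1 such that, writing S_i = {m : a_{i,m} = 1} and S_j = {m : a_{j,m} = 1}, the sets S_i and S_j are disjoint, |S_i| = 2k and |S_j| = 2l with k and l odd, and a_{i,j} = 1 (i.e. j ∈ S_i, which is implicit in the paper's hypotheses and guarantees the group relation (s_i s_j)² = s_i²). Then there exists no group homomorphism ε from Γ(A) to the group of units of Cl_n satisfying ε(s_i) ∈ {e_{S_i}, −e_{S_i}} and ε(s_j) ∈ {e_{S_j}, −e_{S_j}}. (Hence M(A) admits no Spin structure.) -/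

import Mathlib

noncomputable section

open Matrix

/-- The Euclidean group `E(n)`: pairs `(M, b)` with `M ∈ O(n)`, `b ∈ ℝⁿ`,
acting on `ℝⁿ` by `x ↦ M x + b`. -/
@[ext]
structure EuclideanGroup (n : ℕ) where
  M : Matrix.orthogonalGroup (Fin n) ℝ
  b : Fin n → ℝ

namespace EuclideanGroup

variable {n : ℕ}

instance : Mul (EuclideanGroup n) :=
  ⟨fun g h => ⟨g.M * h.M, (g.M : Matrix (Fin n) (Fin n) ℝ) *ᵥ h.b + g.b⟩⟩

instance : One (EuclideanGroup n) := ⟨⟨1, 0⟩⟩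

instance : Inv (EuclideanGroup n) :=
  ⟨fun g => ⟨g.M⁻¹, -(star (g.M : Matrix (Fin n) (Fin n) ℝ) *ᵥ g.b)⟩⟩

@[simp] theorem mul_M (g h : EuclideanGroup n) : (g * h).M = g.M * h.M := rfl
@[simp] theorem mul_b (g h : EuclideanGroup n) :
    (g * h).b = (g.M : Matrix (Fin n) (Fin n) ℝ) *ᵥ h.b + g.b := rfl
@[simp] theorem one_M : (1 : EuclideanGroup n).M = 1 := rfl
@[simp] theorem one_b : (1 : EuclideanGroup n).b = 0 := rfl
@[simp] theorem inv_M (g : EuclideanGroup n) : g⁻¹.M = g.M⁻¹ := rfl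
@[simp] theorem inv_b (g : EuclideanGroup n) :
    g⁻¹.b = -(star (g.M : Matrix (Fin n) (Fin n) ℝ) *ᵥ g.b) := rfl

instance : Group (EuclideanGroup n) where
  mul_assoc a b c :=
    EuclideanGroup.ext (mul_assoc _ _ _)
      (by simp [Matrix.mulVec_add, Matrix.mulVec_mulVec, add_assoc])
  one_mul a := by ext <;> simp
  mul_one a := by ext <;> simp
  inv_mul_cancel a :=
    EuclideanGroup.ext (inv_mul_cancel _) (by exact add_neg_cancel _)

end EuclideanGroup


/-- A Bott matrix: a strictly upper triangular binary matrix
(entries `0` or `1`, and `A i j = 0` whenever `j ≤ i`). -/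
def IsBottMatrix {n : ℕ} (A : Matrix (Fin n) (Fin n) ℕ) : Prop :=
  (∀ i j : Fin n, A i j = 0 ∨ A i j = 1) ∧ ∀ i j : Fin n, (j : ℕ) ≤ (i : ℕ) → A i j = 0

/-- The diagonal matrix `D_i` with `(k,k)`-entry `(-1) ^ (A i k)`. -/
def Dmat {n : ℕ} (A : Matrix (Fin n) (Fin n) ℕ) (i : Fin n) : Matrix (Fin n) (Fin n) ℝ :=
  Matrix.diagonal fun k => (-1 : ℝ) ^ (A i k)

theorem diagonal_pm_mem_orthogonalGroup {n : ℕ} (d : Fin n → ℝ)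
    (hd : ∀ k, d k = 1 ∨ d k = -1) :
    Matrix.diagonal d ∈ Matrix.orthogonalGroup (Fin n) ℝ := by
  rw [Matrix.mem_orthogonalGroup_iff]
  have : star (Matrix.diagonal d) = Matrix.diagonal d := by
    simp [Matrix.star_eq_conjTranspose, Matrix.diagonal_conjTranspose]
  rw [Matrix.diagonal_transpose, Matrix.diagonal_mul_diagonal]
  have h1 : (fun k => d k * d k) = fun _ => (1 : ℝ) :=
    funext fun k => by rcases hd k with h | h <;> simp [h]
  rw [h1, Matrix.diagonal_one]

theorem Dmat_mem {n : ℕ} (A : Matrix (Fin n) (Fin n) ℕ) (i : Fin n) :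
    Dmat A i ∈ Matrix.orthogonalGroup (Fin n) ℝ := by
  refine diagonal_pm_mem_orthogonalGroup _ fun k => ?_
  rcases Nat.even_or_odd (A i k) with h | h
  · exact Or.inl (h.neg_one_pow)
  · exact Or.inr (h.neg_one_pow)

/-- `D_i` as an element of the orthogonal group. -/
def Dorth {n : ℕ} (A : Matrix (Fin n) (Fin n) ℕ) (i : Fin n) :
    Matrix.orthogonalGroup (Fin n) ℝ :=
  ⟨Dmat A i, Dmat_mem A i⟩

/-- The generators `s_i` of the Bieberbach group of the real Bott manifold `M(A)`:
for `i` with `i + 1 < n` (i.e. the mathematical indices `1 ≤ i ≤ n - 1`),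
`s_i = (D_i, (1/2) e_i)`, and the last generator (mathematical index `n`) is
`s_n = (I, e_n)`.  (Indices are `0`-based.) -/
def sgen {n : ℕ} (A : Matrix (Fin n) (Fin n) ℕ) (i : Fin n) : EuclideanGroup n :=
  if (i : ℕ) + 1 = n then ⟨1, Pi.single i 1⟩
  else ⟨Dorth A i, Pi.single i (1 / 2 : ℝ)⟩

/-- The fundamental group `Γ(A)` of the real Bott manifold `M(A)`, as the subgroup
of `E(n)` generated by `s_1, …, s_n`. -/
def BottGroup {n : ℕ} (A : Matrix (Fin n) (Fin n) ℕ) : Subgroup (EuclideanGroup n) :=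
  Subgroup.closure (Set.range (sgen A))

theorem sgen_mem {n : ℕ} (A : Matrix (Fin n) (Fin n) ℕ) (i : Fin n) :
    sgen A i ∈ BottGroup A :=
  Subgroup.subset_closure (Set.mem_range_self i)

/-- The homomorphism sending an affine isometry `(M, b)` to its linear part `M`. -/
def linearPart (n : ℕ) : EuclideanGroup n →* Matrix.orthogonalGroup (Fin n) ℝ where
  toFun g := g.M
  map_one' := rfl
  map_mul' _ _ := rfl

/-- The standard positive definite quadratic form `Q(x) = x₁² + ⋯ + xₙ²` on `ℝⁿ`. -/
def Qstd (n : ℕ) : QuadraticForm ℝ (Fin n → ℝ) :=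
  QuadraticMap.weightedSumSquares ℝ (fun _ : Fin n => (1 : ℝ))

/-- The Clifford algebra `Cl_n` of `Q(x) = x₁² + ⋯ + xₙ²`. -/
abbrev Cl (n : ℕ) := CliffordAlgebra (Qstd n)

/-- For a finite set `S = {s₁ < s₂ < ⋯ < s_k} ⊆ {1, …, n}`, the product
`e_S = ι(e_{s₁}) ι(e_{s₂}) ⋯ ι(e_{s_k})` in `Cl_n` (with `e_∅ = 1`). -/
def eProd {n : ℕ} (S : Finset (Fin n)) : Cl n :=
  ((S.sort (· ≤ ·)).map fun j => CliffordAlgebra.ι (Qstd n) (Pi.single j 1)).prod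


/-!
Because `a_{i,j} = 1` while row `j` vanishes at columns `i` and `j`, the generators satisfy
`(s_i s_j)² = s_i²`. As `S_i` and `S_j` are disjoint and `|S_i|` is even, `e_{S_i}` and `e_{S_j}`
commute, so applying `ε` and cancelling `ε(s_i)²` gives `ε(s_j)² = 1`. On the other hand
`e_S² = (-1)^{|S|(|S|-1)/2}`, which is `-1` for `|S| = 2l` with `l` odd, and `-1 ≠ 1` in `Cl_n`.
-/

section BottGroup

variable {n : ℕ}

theorem sgen_of_ne (A : Matrix (Fin n) (Fin n) ℕ) {i : Fin n} (hi : (i : ℕ) + 1 ≠ n) :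
    sgen A i = ⟨Dorth A i, Pi.single i (1 / 2 : ℝ)⟩ :=
  if_neg hi

theorem sgen_mul_sgen_sq (A : Matrix (Fin n) (Fin n) ℕ) {i j : Fin n} (hij : i ≠ j)
    (hi : (i : ℕ) + 1 ≠ n) (hj : (j : ℕ) + 1 ≠ n)
    (hAii : A i i = 0) (hAji : A j i = 0) (hAjj : A j j = 0) (hAij : A i j = 1) :
    (sgen A i * sgen A j) ^ 2 = sgen A i ^ 2 := by
  rw [sgen_of_ne A hi, sgen_of_ne A hj, sq, sq]
  ext : 1
  · ext1
    simp only [EuclideanGroup.mul_M, Dorth, Submonoid.coe_mul, Dmat, diagonal_mul_diagonal,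
      ← pow_add]
    congr 1
    funext k
    rw [Even.neg_one_pow ⟨_, rfl⟩, Even.neg_one_pow ⟨_, rfl⟩]
  · funext k
    simp only [EuclideanGroup.mul_M, EuclideanGroup.mul_b, Dorth, Submonoid.coe_mul, Dmat,
      diagonal_mul_diagonal, mulVec_add, diagonal_mulVec_single, Pi.add_apply, Pi.single_apply]
    rcases eq_or_ne k i with rfl | hki
    · simp [hAii, hAji, hij]
    rcases eq_or_ne k j with rfl | hkj
    · simp [hAij, hAjj, hki]
    · simp [hki, hkj]

end BottGroup

theorem Commute.sq_eq_one_of_mul_sq_eq_sq {G : Type*} [Group G] {a b : G} (hab : Commute a b)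
    (h : (a * b) ^ 2 = a ^ 2) : b ^ 2 = 1 := by
  rwa [hab.mul_pow, mul_eq_left] at h

theorem Nat.odd_choose_two_two_mul {l : ℕ} (hl : Odd l) : Odd ((2 * l).choose 2) := by
  rw [Nat.choose_two_right, mul_assoc, Nat.mul_div_cancel_left _ two_pos]
  exact hl.mul ⟨l - 1, by have := hl.pos; omega⟩

namespace CliffordAlgebra

variable {R M : Type*} [CommRing R] [AddCommGroup M] [Module R M] {Q : QuadraticForm R M}

theorem ι_mul_prod_map_ι_of_isOrtho {v : M} {L : List M} (h : ∀ w ∈ L, Q.IsOrtho v w) :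
    ι Q v * (L.map (ι Q)).prod = (-1 : R) ^ L.length • ((L.map (ι Q)).prod * ι Q v) := by
  induction L with
  | nil => simp
  | cons w L ih =>
    rw [List.forall_mem_cons] at h
    simp only [List.map_cons, List.prod_cons, List.length_cons]
    rw [← mul_assoc, ι_mul_ι_comm_of_isOrtho h.1, neg_mul, mul_assoc, ih h.2, mul_smul_comm,
      pow_succ, mul_neg_one, neg_smul, ← mul_assoc]

theorem prod_map_ι_mul_prod_map_ι_of_isOrtho {L₁ L₂ : List M}
    (h : ∀ v ∈ L₁, ∀ w ∈ L₂, Q.IsOrtho v w) :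
    (L₁.map (ι Q)).prod * (L₂.map (ι Q)).prod =
      (-1 : R) ^ (L₁.length * L₂.length) • ((L₂.map (ι Q)).prod * (L₁.map (ι Q)).prod) := by
  induction L₁ with
  | nil => simp
  | cons v L₁ ih =>
    rw [List.forall_mem_cons] at h
    simp only [List.map_cons, List.prod_cons, List.length_cons]
    rw [mul_assoc, ih h.2, mul_smul_comm, ← mul_assoc, ι_mul_prod_map_ι_of_isOrtho h.1,
      smul_mul_assoc, smul_smul, mul_assoc, ← pow_add, add_mul, one_mul, add_comm]

theorem prod_map_ι_mul_self_of_pairwise_isOrtho {L : List M} (h : L.Pairwise Q.IsOrtho) :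
    (L.map (ι Q)).prod * (L.map (ι Q)).prod =
      (-1 : R) ^ L.length.choose 2 • algebraMap R _ (L.map Q).prod := by
  induction L with
  | nil => simp
  | cons v L ih =>
    rw [List.pairwise_cons] at h
    simp only [List.map_cons, List.prod_cons, List.length_cons]
    calc ι Q v * (L.map (ι Q)).prod * (ι Q v * (L.map (ι Q)).prod)
        = (-1 : R) ^ L.length •
            ((L.map (ι Q)).prod * (ι Q v * ι Q v) * (L.map (ι Q)).prod) := by
          nth_rw 1 [ι_mul_prod_map_ι_of_isOrtho h.1]
          simp only [smul_mul_assoc, mul_assoc]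
      _ = (-1 : R) ^ (L.length + 1).choose 2 • algebraMap R _ (Q v * (L.map Q).prod) := by
          rw [ι_sq_scalar, mul_assoc, ← Algebra.smul_def, mul_smul_comm, ih h.2, smul_smul,
            smul_smul, map_mul, ← Algebra.smul_def, smul_smul, Nat.choose_succ_succ',
            Nat.choose_one_right, pow_add]
          ring_nf

end CliffordAlgebra

section eProd

open Finset

variable {n : ℕ}

theorem Cl.neg_one_ne_one : (-1 : Cl n) ≠ 1 := fun h =>
  absurd ((algebraMap ℝ (Cl n)).injective (by rwa [map_neg, map_one])) (by norm_num : (-1 : ℝ) ≠ 1)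

theorem Qstd_single (a : Fin n) : Qstd n (Pi.single a 1) = 1 := by
  simp [Qstd, Pi.single_apply]

theorem Qstd_isOrtho_single {a b : Fin n} (h : a ≠ b) :
    (Qstd n).IsOrtho (Pi.single a 1) (Pi.single b 1) := by
  rw [QuadraticMap.isOrtho_def, Qstd_single, Qstd_single]
  simp [Qstd, Pi.single_apply, mul_add, sum_add_distrib, h, h.symm]

theorem eProd_eq_prod_map_ι (S : Finset (Fin n)) :
    eProd S =
      (((S.sort (· ≤ ·)).map fun j => Pi.single j 1).map (CliffordAlgebra.ι (Qstd n))).prod := by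
  rw [eProd, List.map_map]
  rfl

theorem eProd_mul_eProd_of_disjoint {S T : Finset (Fin n)} (h : Disjoint S T) :
    eProd S * eProd T = (-1 : ℝ) ^ (#S * #T) • (eProd T * eProd S) := by
  rw [eProd_eq_prod_map_ι, eProd_eq_prod_map_ι,
    CliffordAlgebra.prod_map_ι_mul_prod_map_ι_of_isOrtho, List.length_map, List.length_map,
    length_sort, length_sort]
  simp only [List.mem_map, mem_sort]
  rintro _ ⟨a, ha, rfl⟩ _ ⟨b, hb, rfl⟩
  exact Qstd_isOrtho_single (disjoint_iff_ne.mp h a ha b hb)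

theorem eProd_mul_self (S : Finset (Fin n)) :
    eProd S * eProd S = (-1 : ℝ) ^ (#S).choose 2 • 1 := by
  rw [eProd_eq_prod_map_ι, CliffordAlgebra.prod_map_ι_mul_self_of_pairwise_isOrtho,
    List.length_map, length_sort]
  · simp [Function.comp_def, Qstd_single]
  · exact List.pairwise_map.mpr ((S.sort_nodup _).imp Qstd_isOrtho_single)

theorem commute_eProd_of_disjoint {S T : Finset (Fin n)} (h : Disjoint S T) (hS : Even #S) :
    Commute (eProd S) (eProd T) := by
  rw [Commute, SemiconjBy, eProd_mul_eProd_of_disjoint h, (hS.mul_right _).neg_one_pow, one_smul]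

theorem eProd_mul_self_of_card_eq_two_mul_odd {S : Finset (Fin n)} {l : ℕ} (hS : #S = 2 * l)
    (hl : Odd l) : eProd S * eProd S = -1 := by
  rw [eProd_mul_self, hS, (Nat.odd_choose_two_two_mul hl).neg_one_pow, neg_one_smul]

end eProd

theorem no_spin_part_II_general (n : ℕ)
    (A : Matrix (Fin n) (Fin n) ℕ) (hA : IsBottMatrix A)
    (i j : Fin n) (hij : i < j) (hj : (j : ℕ) + 1 < n)
    (k l : ℕ) (hl : Odd l)
    (hSi : (Finset.univ.filter fun m => A i m = 1).card = 2 * k)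
    (hSj : (Finset.univ.filter fun m => A j m = 1).card = 2 * l)
    (hdisj : Disjoint (Finset.univ.filter fun m => A i m = 1)
      (Finset.univ.filter fun m => A j m = 1))
    (hij1 : A i j = 1) :
    ¬∃ ε : BottGroup A →* (Cl n)ˣ,
      (((ε ⟨sgen A i, sgen_mem A i⟩ : (Cl n)ˣ) : Cl n) =
          eProd (Finset.univ.filter fun m => A i m = 1) ∨
        ((ε ⟨sgen A i, sgen_mem A i⟩ : (Cl n)ˣ) : Cl n) =
          -eProd (Finset.univ.filter fun m => A i m = 1)) ∧
      (((ε ⟨sgen A j, sgen_mem A j⟩ : (Cl n)ˣ) : Cl n) =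
          eProd (Finset.univ.filter fun m => A j m = 1) ∨
        ((ε ⟨sgen A j, sgen_mem A j⟩ : (Cl n)ˣ) : Cl n) =
          -eProd (Finset.univ.filter fun m => A j m = 1)) := by
  rintro ⟨ε, hεi, hεj⟩
  set si : BottGroup A := ⟨sgen A i, sgen_mem A i⟩
  set sj : BottGroup A := ⟨sgen A j, sgen_mem A j⟩
  have hij' : (i : ℕ) < j := hij
  have hrel : (si * sj) ^ 2 = si ^ 2 := Subtype.ext <|
    sgen_mul_sgen_sq A hij.ne (by omega) (by omega) (hA.2 i i le_rfl) (hA.2 j i hij'.le)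
      (hA.2 j j le_rfl) hij1
  have hcomm : Commute (ε si) (ε sj) := by
    have h := commute_eProd_of_disjoint hdisj ⟨k, by omega⟩
    refine Commute.units_of_val ?_
    rcases hεi with h₁ | h₁ <;> rcases hεj with h₂ | h₂ <;> simp [h₁, h₂, h]
  have hsq_one : (ε sj : Cl n) * ε sj = 1 := by
    simpa [sq] using congrArg Units.val <| hcomm.sq_eq_one_of_mul_sq_eq_sq <| by
      rw [← map_mul, ← map_pow, ← map_pow, hrel]
  have hsq_neg_one : (ε sj : Cl n) * ε sj = -1 := by
    rcases hεj with h | h <;> simp [h, eProd_mul_self_of_card_eq_two_mul_odd hSj hl]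
  exact Cl.neg_one_ne_one (hsq_neg_one ▸ hsq_one)

/-- Main Theorem, part II.  Suppose every row of the Bott matrix `A`
has an even number of nonzero entries, and there are `1 ≤ i < j ≤ n - 1` such that the
supports `S_i`, `S_j` of rows `i`, `j` are disjoint, `|S_i| = 2k`, `|S_j| = 2l` with `k`
and `l` odd, and `a_{i,j} = 1`.  Then no group homomorphism `ε : Γ(A) → Cl_nˣ` satisfies
`ε(s_i) = ± e_{S_i}` and `ε(s_j) = ± e_{S_j}`.  (Hence `M(A)` has no Spin structure.) -/
theorem no_spin_part_II (n : ℕ) (hn : 2 ≤ n)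
    (A : Matrix (Fin n) (Fin n) ℕ) (hA : IsBottMatrix A)
    (horient : ∀ i : Fin n, Even (Finset.univ.filter fun k => A i k ≠ 0).card)
    (i j : Fin n) (hij : i < j) (hj : (j : ℕ) + 1 < n)
    (k l : ℕ) (hk : Odd k) (hl : Odd l)
    (hSi : (Finset.univ.filter fun m => A i m = 1).card = 2 * k)
    (hSj : (Finset.univ.filter fun m => A j m = 1).card = 2 * l)
    (hdisj : Disjoint (Finset.univ.filter fun m => A i m = 1)
      (Finset.univ.filter fun m => A j m = 1))
    (hij1 : A i j = 1) :
    ¬∃ ε : BottGroup A →* (Cl n)ˣ,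
      (((ε ⟨sgen A i, sgen_mem A i⟩ : (Cl n)ˣ) : Cl n) =
          eProd (Finset.univ.filter fun m => A i m = 1) ∨
        ((ε ⟨sgen A i, sgen_mem A i⟩ : (Cl n)ˣ) : Cl n) =
          -eProd (Finset.univ.filter fun m => A i m = 1)) ∧
      (((ε ⟨sgen A j, sgen_mem A j⟩ : (Cl n)ˣ) : Cl n) =
          eProd (Finset.univ.filter fun m => A j m = 1) ∨
        ((ε ⟨sgen A j, sgen_mem A j⟩ : (Cl n)ˣ) : Cl n) =
          -eProd (Finset.univ.filter fun m => A j m = 1)) :=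
  no_spin_part_II_general n A hA i j hij hj k l hl hSi hSj hdisj hij1
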